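/- arXiv:2511.15928 — 4 statements merged into one kernel-verified Lean document; each statement's English description precedes it below -/
import Mathlib

section
/- Let b > 0 and y > 0 be real. Then the integral of y^z/z² over the vertical line Re(z) = b (i.e., ∫_{b−i∞}^{b+i∞} y^z/z² dz) equals 2πi·log y if y > 1, and equals 0 if 0 < y ≤ 1. -/
/-!
The ramp `g(s) = s₊ e^{-bs}` has Fourier transform `1 / (b + 2πiξ)²`, which is integrable, so
Fourier inversion gives `∫ e^{iut} / (b + it)² dt = 2π g(u)`. Since `y^{b+it} = y^b e^{it log y}`,
taking `u = log y` turns the vertical-line integral into `2π y^b (log y)₊ y^{-b} = 2π (log y)₊`.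
-/

open MeasureTheory Set Filter Topology Complex
open scoped FourierTransform

lemma norm_cexp_neg_mul_ofReal (c : ℂ) (s : ℝ) :
    ‖cexp (-(c * s))‖ = Real.exp (-c.re * s) := by
  simp [Complex.norm_exp]

section RampLaplace

variable {c : ℂ}

lemma tendsto_pow_mul_cexp_neg_mul_atTop (hc : 0 < c.re) (n : ℕ) :
    Tendsto (fun s : ℝ => (s : ℂ) ^ n * cexp (-(c * s))) atTop (𝓝 0) := by
  rw [tendsto_zero_iff_norm_tendsto_zero]
  refine (tendsto_rpow_mul_exp_neg_mul_atTop_nhds_zero n c.re hc).congr' ?_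
  filter_upwards [eventually_ge_atTop 0] with s hs
  rw [norm_mul, norm_pow, norm_real, Real.norm_of_nonneg hs, norm_cexp_neg_mul_ofReal,
    Real.rpow_natCast]

lemma integrableOn_Ioi_mul_cexp_neg_mul (hc : 0 < c.re) :
    IntegrableOn (fun s : ℝ => (s : ℂ) * cexp (-(c * s))) (Ioi 0) := by
  have hreal : IntegrableOn (fun s : ℝ => s ^ (1 : ℝ) * Real.exp (-c.re * s ^ (1 : ℝ))) (Ioi 0) :=
    integrableOn_rpow_mul_exp_neg_mul_rpow (by norm_num) one_pos hc
  refine hreal.mono' (by fun_prop) ?_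
  filter_upwards [ae_restrict_mem measurableSet_Ioi] with s hs
  rw [norm_mul, norm_real, Real.norm_of_nonneg (le_of_lt hs), norm_cexp_neg_mul_ofReal,
    Real.rpow_one]

lemma integral_Ioi_mul_cexp_neg_mul (hc : 0 < c.re) :
    ∫ s in Ioi (0 : ℝ), (s : ℂ) * cexp (-(c * s)) = 1 / c ^ 2 := by
  have hc0 : c ≠ 0 := by rintro rfl; simp at hc
  set F : ℝ → ℂ := fun s => -((s / c + 1 / c ^ 2) * cexp (-(c * s)))
  have hF : ∀ s : ℝ, HasDerivAt F ((s : ℂ) * cexp (-(c * s))) s := by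
    intro s
    have hs : HasDerivAt (fun s : ℝ => (s : ℂ)) 1 s := hasDerivAt_id s |>.ofReal_comp
    have hexp : HasDerivAt (fun s : ℝ => cexp (-(c * s))) (cexp (-(c * s)) * -c) s := by
      simpa using ((hs.const_mul c).neg).cexp
    refine (((hs.div_const c).add_const (1 / c ^ 2)).mul hexp).neg.congr_deriv ?_
    field_simp
    ring
  have hlim : Tendsto F atTop (𝓝 0) := by
    have := (((tendsto_pow_mul_cexp_neg_mul_atTop hc 1).div_const c).add
      ((tendsto_pow_mul_cexp_neg_mul_atTop hc 0).const_mul (1 / c ^ 2))).neg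
    simp only [zero_div, mul_zero, add_zero, neg_zero] at this
    refine this.congr fun s => ?_
    simp only [F, pow_one, pow_zero]
    ring
  rw [integral_Ioi_of_hasDerivAt_of_tendsto' (fun s _ => hF s)
    (integrableOn_Ioi_mul_cexp_neg_mul hc) hlim]
  simp [F]

end RampLaplace

lemma integrable_inv_add_mul_I_sq {b : ℝ} (hb : b ≠ 0) :
    Integrable (fun t : ℝ => (((b : ℂ) + t * I) ^ 2)⁻¹) := by
  refine (integrable_inv_one_add_sq.const_mul ((b ^ 2)⁻¹ + 1)).mono' (by fun_prop) ?_
  refine Eventually.of_forall fun t => ?_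
  have hnorm : ‖((b : ℂ) + t * I) ^ 2‖ = b ^ 2 + t ^ 2 := by
    rw [norm_pow, Complex.sq_norm, normSq_add_mul_I]
  have hb2 : 0 < b ^ 2 := by positivity
  rw [norm_inv, hnorm, ← div_eq_mul_inv, inv_le_iff_one_le_mul₀ (by positivity),
    div_mul_eq_mul_div, le_div_iff₀ (by positivity)]
  have hb2_inv : (b ^ 2)⁻¹ * b ^ 2 = 1 := inv_mul_cancel₀ hb2.ne'
  -- `(b⁻² + 1)(b² + t²) = 1 + t² + b² + t²/b²`
  nlinarith [mul_nonneg (inv_nonneg.mpr hb2.le) (sq_nonneg t), sq_nonneg t]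

lemma integrable_cexp_mul_I_div_sq {b : ℝ} (hb : b ≠ 0) (u : ℝ) :
    Integrable (fun t : ℝ => cexp (u * t * I) / ((b : ℂ) + t * I) ^ 2) := by
  simp_rw [div_eq_mul_inv]
  refine (integrable_inv_add_mul_I_sq hb).bdd_mul (c := 1) (by fun_prop)
    (.of_forall fun t => ?_)
  rw [← ofReal_mul, norm_exp_ofReal_mul_I]

noncomputable def rampExp (b s : ℝ) : ℂ := ((max s 0 : ℝ) : ℂ) * cexp (-(b * s))

section RampExp

variable {b : ℝ}

lemma continuous_rampExp (b : ℝ) : Continuous (rampExp b) := by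
  unfold rampExp; fun_prop

lemma rampExp_of_nonpos {s : ℝ} (hs : s ≤ 0) : rampExp b s = 0 := by
  simp [rampExp, max_eq_right hs]

lemma rampExp_of_nonneg {s : ℝ} (hs : 0 ≤ s) : rampExp b s = s * cexp (-(b * s)) := by
  simp [rampExp, max_eq_left hs]

lemma integrable_rampExp (hb : 0 < b) : Integrable (rampExp b) := by
  rw [← integrableOn_univ, ← Iic_union_Ioi (a := 0)]
  refine IntegrableOn.union ?_ ?_
  · exact integrableOn_zero.congr_fun (fun s hs => (rampExp_of_nonpos hs).symm) measurableSet_Iic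
  · exact (integrableOn_Ioi_mul_cexp_neg_mul (c := b) (by simpa using hb)).congr_fun
      (fun s hs => (rampExp_of_nonneg (le_of_lt hs)).symm) measurableSet_Ioi

lemma fourier_rampExp (hb : 0 < b) (ξ : ℝ) :
    𝓕 (rampExp b) ξ = (((b : ℂ) + (2 * Real.pi * ξ : ℝ) * I) ^ 2)⁻¹ := by
  set c : ℂ := b + (2 * Real.pi * ξ : ℝ) * I
  have hc : 0 < c.re := by simpa [c] using hb
  have hint : Integrable (fun v : ℝ => cexp (↑(-2 * Real.pi * v * ξ) * I) • rampExp b v) :=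
    (integrable_rampExp hb).bdd_mul (c := 1) (by fun_prop)
      (Eventually.of_forall fun v => by rw [norm_exp_ofReal_mul_I])
  rw [Real.fourier_real_eq_integral_exp_smul, ← integral_add_compl measurableSet_Iic hint,
    compl_Iic, setIntegral_eq_zero_of_forall_eq_zero
      (fun v hv => by rw [rampExp_of_nonpos hv, smul_zero]), zero_add, inv_eq_one_div,
    ← integral_Ioi_mul_cexp_neg_mul hc]
  refine setIntegral_congr_fun measurableSet_Ioi fun v hv => ?_
  rw [rampExp_of_nonneg (le_of_lt hv), smul_eq_mul, mul_left_comm, ← Complex.exp_add]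
  simp only [c]
  push_cast
  ring_nf

lemma integrable_fourier_rampExp (hb : 0 < b) : Integrable (𝓕 (rampExp b)) := by
  simp_rw [funext (fourier_rampExp hb)]
  exact (integrable_inv_add_mul_I_sq hb.ne').comp_mul_left' (by positivity)

lemma integral_cexp_mul_I_div_sq (hb : 0 < b) (u : ℝ) :
    ∫ t : ℝ, cexp (u * t * I) / ((b : ℂ) + t * I) ^ 2 = 2 * Real.pi * rampExp b u := by
  have hinv := (integrable_rampExp hb).fourierInv_fourier_eq (integrable_fourier_rampExp hb)
    (continuous_rampExp b).continuousAt (v := u)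
  rw [Real.fourierInv_eq'] at hinv
  have hscale := Measure.integral_comp_mul_left
    (fun t : ℝ => cexp (u * t * I) / ((b : ℂ) + t * I) ^ 2) (2 * Real.pi)
  rw [abs_of_pos (by positivity), eq_inv_smul_iff₀ (by positivity)] at hscale
  rw [← hscale, ← hinv, Complex.real_smul, ofReal_mul, ofReal_ofNat]
  congr 1
  refine integral_congr_ae (.of_forall fun ξ => ?_)
  simp only [fourier_rampExp hb, smul_eq_mul, div_eq_mul_inv, RCLike.inner_apply, conj_trivial]
  push_cast
  ring_nf

end RampExp

lemma ofReal_cpow_add_mul_I {y : ℝ} (hy : 0 < y) (b t : ℝ) :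
    (y : ℂ) ^ ((b : ℂ) + t * I) = ((y ^ b : ℝ) : ℂ) * cexp (Real.log y * t * I) := by
  have hy0 : (y : ℂ) ≠ 0 := ofReal_ne_zero.mpr hy.ne'
  rw [cpow_add _ _ hy0, ← ofReal_cpow hy.le, cpow_def_of_ne_zero hy0, ← ofReal_log hy.le, mul_assoc]

lemma ofReal_rpow_mul_rampExp_log {y : ℝ} (hy : 0 < y) (b : ℝ) :
    ((y ^ b : ℝ) : ℂ) * rampExp b (Real.log y) = ((max (Real.log y) 0 : ℝ) : ℂ) := by
  rw [rampExp, mul_left_comm, Real.rpow_def_of_pos hy, ofReal_exp, ← Complex.exp_add]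
  push_cast
  ring_nf
  simp

open MeasureTheory in
theorem stmt_2 (b y : ℝ) (hb : 0 < b) (hy : 0 < y) :
    Integrable (fun t : ℝ => (y : ℂ) ^ ((b : ℂ) + t * Complex.I) /
        ((b : ℂ) + t * Complex.I) ^ 2) ∧
    Complex.I * ∫ t : ℝ, (y : ℂ) ^ ((b : ℂ) + t * Complex.I) /
        ((b : ℂ) + t * Complex.I) ^ 2 =
      if 1 < y then 2 * Real.pi * Complex.I * Real.log y else 0 := by
  have hintegrand : (fun t : ℝ => (y : ℂ) ^ ((b : ℂ) + t * I) / ((b : ℂ) + t * I) ^ 2) =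
      fun t : ℝ => ((y ^ b : ℝ) : ℂ) * (cexp (Real.log y * t * I) / ((b : ℂ) + t * I) ^ 2) := by
    ext t
    rw [ofReal_cpow_add_mul_I hy, mul_div_assoc]
  rw [hintegrand]
  refine ⟨(integrable_cexp_mul_I_div_sq hb.ne' _).const_mul _, ?_⟩
  rw [integral_const_mul, integral_cexp_mul_I_div_sq hb]
  have hvalue := ofReal_rpow_mul_rampExp_log hy b
  split_ifs with hy1
  · rw [max_eq_left (Real.log_pos hy1).le] at hvalue
    linear_combination 2 * Real.pi * I * hvalue
  · rw [max_eq_right (Real.log_nonpos hy.le (not_lt.mp hy1)), ofReal_zero] at hvalue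
    linear_combination 2 * Real.pi * I * hvalue
end

section
/- Fix K₀ > 0. There is a constant C = C(K₀) such that for all complex α with |α| ≤ K₀, all integers N ≥ 0, and all integers j with 0 ≤ j ≤ N, one has 1/|Γ(α − j)| ≤ C·N!·(N+1)^{K₀}. -/
/-!
Iterating `1/Γ(s) = s · 1/Γ(s + 1)` (valid for every `s`, since `1/Γ` is entire) gives
`1/Γ(α - j) = (α - 1)(α - 2)⋯(α - j) · 1/Γ(α)`. The entire function `1/Γ` is bounded on the disc
`‖α‖ ≤ K₀`, and the product is at most `∏_{k=1}^N (K₀ + k) = N! ∏_{k=1}^N (1 + K₀/k)`, which is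
bounded by `N! · exp (K₀ · H_N) ≤ e^{K₀} N! (N + 1)^{K₀}` with `H_N ≤ 1 + log (N + 1)`.
-/

open Finset Complex Nat

theorem Complex.inv_Gamma_sub_natCast (α : ℂ) (j : ℕ) :
    (Gamma (α - j))⁻¹ = (∏ k ∈ range j, (α - (k + 1))) * (Gamma α)⁻¹ := by
  induction j with
  | zero => simp
  | succ j ih =>
    rw [one_div_Gamma_eq_self_mul_one_div_Gamma_add_one, prod_range_succ, Nat.cast_succ,
      show α - (j + 1) + 1 = α - j by ring, ih]
    ring

theorem Complex.exists_norm_inv_Gamma_le (R : ℝ) :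
    ∃ M : ℝ, 0 < M ∧ ∀ α : ℂ, ‖α‖ ≤ R → ‖(Gamma α)⁻¹‖ ≤ M := by
  obtain ⟨M, hM⟩ := (isCompact_closedBall (0 : ℂ) R).exists_bound_of_continuousOn
    (continuous_norm.comp differentiable_one_div_Gamma.continuous).continuousOn
  refine ⟨max M 1, by positivity, fun α hα => ?_⟩
  have := hM α (by rwa [mem_closedBall_zero_iff])
  simp only [Function.comp_apply, norm_norm] at this
  exact this.trans (le_max_left _ _)

theorem norm_prod_sub_natCast_succ_le (α : ℂ) (j : ℕ) :
    ‖∏ k ∈ range j, (α - (k + 1))‖ ≤ ∏ k ∈ range j, (‖α‖ + (k + 1)) := by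
  rw [norm_prod]
  gcongr with k
  calc ‖α - (k + 1)‖ ≤ ‖α‖ + ‖(k : ℂ) + 1‖ := norm_sub_le _ _
    _ = ‖α‖ + (k + 1) := by norm_cast

theorem Real.exp_mul_harmonic_le {x : ℝ} (hx : 0 ≤ x) (N : ℕ) :
    exp (x * harmonic N) ≤ exp x * ((N : ℝ) + 1) ^ x := by
  have hlog : (harmonic N : ℝ) ≤ 1 + log ((N : ℝ) + 1) := by
    refine (harmonic_le_one_add_log N).trans (add_le_add_right ?_ 1)
    rcases N.eq_zero_or_pos with rfl | hN
    · simp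
    · exact log_le_log (by exact_mod_cast hN) (by linarith)
  calc exp (x * harmonic N) ≤ exp (x * (1 + log ((N : ℝ) + 1))) := by gcongr
    _ = exp x * ((N : ℝ) + 1) ^ x := by
      rw [rpow_def_of_pos (by positivity), mul_add, mul_one, exp_add, mul_comm (log _)]

theorem prod_add_natCast_succ_le {x : ℝ} (hx : 0 ≤ x) (N : ℕ) :
    ∏ k ∈ range N, (x + (k + 1)) ≤ N ! * Real.exp x * ((N : ℝ) + 1) ^ x := by
  have hfactor : ∏ k ∈ range N, (x + (k + 1)) =
      N ! * ∏ k ∈ range N, (1 + x / (k + 1)) := by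
    rw [← prod_range_add_one_eq_factorial, Nat.cast_prod, ← prod_mul_distrib]
    refine prod_congr rfl fun k _ => ?_
    push_cast
    field_simp
    ring
  have hexp : ∏ k ∈ range N, (1 + x / (k + 1)) ≤ Real.exp (x * harmonic N) :=
    calc ∏ k ∈ range N, (1 + x / (k + 1))
        ≤ ∏ k ∈ range N, Real.exp (x / (k + 1)) := by
          gcongr with k
          linarith [Real.add_one_le_exp (x / (k + 1))]
      _ = Real.exp (x * harmonic N) := by
          rw [← Real.exp_sum, harmonic, Rat.cast_sum, mul_sum]
          push_cast
          rfl
  rw [hfactor, mul_assoc]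
  gcongr
  exact hexp.trans (Real.exp_mul_harmonic_le hx N)

theorem stmt_10 (K₀ : ℝ) (hK₀ : 0 < K₀) :
    ∃ C : ℝ, 0 < C ∧ ∀ α : ℂ, ‖α‖ ≤ K₀ → ∀ N : ℕ, ∀ j : ℕ, j ≤ N →
      1 / ‖Complex.Gamma (α - j)‖ ≤
        C * N.factorial * ((N : ℝ) + 1) ^ K₀ := by
  obtain ⟨M, hM, hbound⟩ := exists_norm_inv_Gamma_le K₀
  refine ⟨M * Real.exp K₀, by positivity, fun α hα N j hjN => ?_⟩
  have hprod : ∏ k ∈ range j, (‖α‖ + (k + 1)) ≤ ∏ k ∈ range N, (K₀ + (k + 1)) :=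
    calc ∏ k ∈ range j, (‖α‖ + (k + 1)) ≤ ∏ k ∈ range j, (K₀ + (k + 1)) := by gcongr
      _ ≤ ∏ k ∈ range N, (K₀ + (k + 1)) :=
        prod_le_prod_of_subset_of_one_le (range_subset_range.mpr hjN)
          (fun _ _ => by positivity) (fun k _ _ => by linarith [(k.cast_nonneg : (0 : ℝ) ≤ k)])
  calc 1 / ‖Gamma (α - j)‖ = ‖∏ k ∈ range j, (α - (k + 1))‖ * ‖(Gamma α)⁻¹‖ := by
        rw [one_div, ← norm_inv, inv_Gamma_sub_natCast, norm_mul]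
    _ ≤ (N ! * Real.exp K₀ * ((N : ℝ) + 1) ^ K₀) * M := by
        gcongr
        · exact (norm_prod_sub_natCast_succ_le α j).trans
            (hprod.trans (prod_add_natCast_succ_le hK₀.le N))
        · exact hbound α hα
    _ = M * Real.exp K₀ * N ! * ((N : ℝ) + 1) ^ K₀ := by ring
end

section
/- Suppose (a_n) are complex numbers, ν > 0, A ≥ 1, κ_A ≥ 2, and for all real x > 1, ∑_{x < n ≤ x + x/(log x)^A} |a_n| ≤ κ_A·x^{1/ν}/(log x)^A. Then for all real x > 1, ∑_{x < n ≤ 2x} |a_n| ≤ κ·x^{1/ν} with κ := κ_A·2^{A + 1/ν}. -/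
/-!
Cover `(x, 2x]` by the short intervals `(y, y + y / (log y) ^ A]` of the hypothesis, starting at
`y = x`. For `y ≥ e` put `L = (log y) ^ A ≥ 1`; one step contributes at most `κ (2x) ^ p / L`,
while it raises `log₂ y` by `log₂ (1 + 1 / L) ≥ 1 / L`. Since `log₂` grows by `1` from `x` to `2x`,
the steps together contribute at most `2 κ (2x) ^ p` (the last step may overshoot `2x`).
For `1 < x ≤ e` a single interval, started at `y = max x 1.7`, covers `(x, 2x]` because `log y ≤ 1`,
and costs `κ (2x) ^ p / (log y) ^ A ≤ 2 ^ A κ (2x) ^ p` because `log y ≥ 1 / 2`.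
-/

open Real Finset

theorem le_logb_two_one_add {t : ℝ} (ht0 : 0 ≤ t) (ht1 : t ≤ 1) : t ≤ logb 2 (1 + t) := by
  rw [le_logb_iff_rpow_le one_lt_two (by linarith)]
  simpa [one_add_one_eq_two] using
    rpow_one_add_le_one_add_mul_self (s := 1) (by norm_num) ht0 ht1

theorem inv_two_le_log_seventeen_div_ten : 2⁻¹ ≤ log (17 / 10) := by
  rw [le_log_iff_exp_le (by norm_num)]
  have hsq : exp 2⁻¹ * exp 2⁻¹ = exp 1 := by rw [← exp_add]; norm_num
  nlinarith [exp_one_lt_d9, exp_pos 2⁻¹]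

noncomputable def floorIocSum (f : ℕ → ℝ) (u v : ℝ) : ℝ :=
  ∑ n ∈ Ioc ⌊u⌋₊ ⌊v⌋₊, f n

section

variable {f : ℕ → ℝ} {A κ p : ℝ}

@[simp]
theorem floorIocSum_self (u : ℝ) : floorIocSum f u u = 0 := by
  simp [floorIocSum]

theorem floorIocSum_add_floorIocSum {u v w : ℝ} (huv : u ≤ v) (hvw : v ≤ w) :
    floorIocSum f u v + floorIocSum f v w = floorIocSum f u w :=
  sum_Ioc_consecutive f (Nat.floor_le_floor huv) (Nat.floor_le_floor hvw)

theorem floorIocSum_le_floorIocSum (hf : ∀ n, 0 ≤ f n) {u u' v v' : ℝ} (hu : ⌊u'⌋₊ ≤ ⌊u⌋₊)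
    (hv : v ≤ v') :
    floorIocSum f u v ≤ floorIocSum f u' v' :=
  sum_le_sum_of_subset_of_nonneg (Ioc_subset_Ioc hu (Nat.floor_le_floor hv))
    fun n _ _ ↦ hf n

theorem floorIocSum_le_of_steps (hf : ∀ n, 0 ≤ f n) {h F : ℝ → ℝ} {C δ x z : ℝ} (hδ : 0 < δ)
    (hC : 0 ≤ C) (hF : MonotoneOn F (Set.Icc x z))
    (hstep : ∀ y ∈ Set.Ico x z,
      δ ≤ h y ∧ floorIocSum f y (y + h y) ≤ C * min 1 (F (y + h y) - F y))
    (hxz : x ≤ z) :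
    floorIocSum f x z ≤ C * (F z - F x + 1) := by
  suffices key : ∀ n : ℕ, ∀ y ∈ Set.Icc x z, z - y ≤ n * δ →
      floorIocSum f y z ≤ C * (F z - F y + 1) from
    key ⌈(z - x) / δ⌉₊ x ⟨le_rfl, hxz⟩ ((div_le_iff₀ hδ).1 (Nat.le_ceil _))
  intro n
  induction n with
  | zero =>
    intro y hy hzy
    obtain rfl : y = z := by simp at hzy; linarith [hy.2]
    simpa using hC
  | succ n ih =>
    intro y hy hzy
    obtain rfl | hyz := eq_or_lt_of_le hy.2
    · simpa using hC
    obtain ⟨hδh, hS⟩ := hstep y ⟨hy.1, hyz⟩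
    have hFyz : F y ≤ F z := hF hy ⟨hxz, le_rfl⟩ hy.2
    rcases le_or_gt z (y + h y) with hcover | hshort
    · calc floorIocSum f y z ≤ floorIocSum f y (y + h y) :=
            floorIocSum_le_floorIocSum hf le_rfl hcover
        _ ≤ C * min 1 (F (y + h y) - F y) := hS
        _ ≤ C * 1 := by gcongr; exact min_le_left _ _
        _ ≤ C * (F z - F y + 1) := by gcongr; linarith
    · have hy' : y + h y ∈ Set.Icc x z := ⟨by linarith [hy.1], hshort.le⟩
      calc floorIocSum f y z
          = floorIocSum f y (y + h y) + floorIocSum f (y + h y) z :=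
            (floorIocSum_add_floorIocSum (by linarith) hshort.le).symm
        _ ≤ C * (F (y + h y) - F y) + C * (F z - F (y + h y) + 1) := by
            gcongr
            · exact hS.trans (by gcongr; exact min_le_right _ _)
            · exact ih _ hy' (by push_cast at hzy; linarith)
        _ = C * (F z - F y + 1) := by ring

theorem floorIocSum_two_mul_le_of_exp_one_le (hf : ∀ n, 0 ≤ f n) (hA : 0 ≤ A) (hκ : 0 ≤ κ)
    (hp : 0 ≤ p)
    (hgrowth : ∀ y : ℝ, 1 < y →
      floorIocSum f y (y + y / log y ^ A) ≤ κ * y ^ p / log y ^ A)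
    {x : ℝ} (hx : exp 1 ≤ x) :
    floorIocSum f x (2 * x) ≤ 2 * (κ * (2 * x) ^ p) := by
  have hx1 : 1 < x := by linarith [add_one_le_exp (1 : ℝ)]
  have hx0 : 0 < x := by linarith
  have hlogx : 1 ≤ log x := (le_log_iff_exp_le hx0).2 hx
  have hdouble : logb 2 (2 * x) - logb 2 x = 1 := by
    rw [logb_mul two_ne_zero hx0.ne', logb_self_eq_one one_lt_two]; ring
  have hlog2x : 0 < log (2 * x) := log_pos (by linarith)
  have hsteps : floorIocSum f x (2 * x) ≤ κ * (2 * x) ^ p * (logb 2 (2 * x) - logb 2 x + 1) :=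
    floorIocSum_le_of_steps hf (h := fun y ↦ y / log y ^ A) (δ := x / log (2 * x) ^ A)
      (div_pos hx0 (rpow_pos_of_pos hlog2x A)) (by positivity)
      (fun u hu v _ huv ↦ logb_le_logb_of_le one_lt_two (hx0.trans_le hu.1) huv)
      ?_ (by linarith)
  · rw [hdouble] at hsteps; linarith
  intro y ⟨hxy, hy2x⟩
  have hy0 : 0 < y := hx0.trans_le hxy
  have hlogy : 1 ≤ log y := hlogx.trans (log_le_log hx0 hxy)
  have hL : 1 ≤ log y ^ A := one_le_rpow hlogy hA
  have hLpos : 0 < log y ^ A := by linarith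
  have hincr : 1 / log y ^ A ≤ logb 2 (y + y / log y ^ A) - logb 2 y := by
    have hsplit : y + y / log y ^ A = y * (1 + 1 / log y ^ A) := by ring
    rw [hsplit, logb_mul hy0.ne' (by positivity), add_sub_cancel_left]
    exact le_logb_two_one_add (by positivity) ((div_le_one hLpos).2 hL)
  refine ⟨div_le_div₀ hy0.le hxy hLpos ?_, ?_⟩
  · exact rpow_le_rpow (by linarith) (log_le_log hy0 hy2x.le) hA
  calc floorIocSum f y (y + y / log y ^ A)
        ≤ κ * y ^ p / log y ^ A := hgrowth y (hx1.trans_le hxy)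
    _ = κ * y ^ p * (1 / log y ^ A) := by ring
    _ ≤ κ * (2 * x) ^ p * min 1 (logb 2 (y + y / log y ^ A) - logb 2 y) := by
      gcongr
      exact le_min ((div_le_one hLpos).2 hL) hincr

theorem floorIocSum_two_mul_le_of_le_exp_one (hf : ∀ n, 0 ≤ f n) (hA : 0 ≤ A) (hκ : 0 ≤ κ)
    (hp : 0 ≤ p)
    (hgrowth : ∀ y : ℝ, 1 < y →
      floorIocSum f y (y + y / log y ^ A) ≤ κ * y ^ p / log y ^ A)
    {x : ℝ} (hx1 : 1 < x) (hxe : x ≤ exp 1) :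
    floorIocSum f x (2 * x) ≤ 2 ^ A * (κ * (2 * x) ^ p) := by
  set y := max x (17 / 10)
  have hy1 : 1 < y := hx1.trans_le (le_max_left _ _)
  have hy2x : y ≤ 2 * x := max_le (by linarith) (by linarith)
  have hfloor : ⌊y⌋₊ ≤ ⌊x⌋₊ := by
    have h1 : ⌊(17 / 10 : ℝ)⌋₊ < 2 := (Nat.floor_lt (by norm_num)).2 (by norm_num)
    have h2 : 1 ≤ ⌊x⌋₊ := Nat.le_floor (by simpa using hx1.le)
    rw [Nat.floor_mono.map_max]
    omega
  have hlogy : 2⁻¹ ≤ log y :=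
    inv_two_le_log_seventeen_div_ten.trans (log_le_log (by norm_num) (le_max_right _ _))
  have hlogy1 : log y ≤ 1 :=
    (log_le_iff_le_exp (by linarith)).2 (max_le hxe (by linarith [exp_one_gt_d9]))
  have hLlow : (2 ^ A)⁻¹ ≤ log y ^ A := by
    rw [← inv_rpow zero_le_two]; exact rpow_le_rpow (by norm_num) hlogy hA
  have hLpos : 0 < log y ^ A := lt_of_lt_of_le (by positivity) hLlow
  have hcover : 2 * x ≤ y + y / log y ^ A := by
    have := le_div_self (a := y) (by linarith) hLpos (rpow_le_one (by linarith) hlogy1 hA)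
    linarith [le_max_left x (17 / 10)]
  calc floorIocSum f x (2 * x) ≤ floorIocSum f y (y + y / log y ^ A) :=
        floorIocSum_le_floorIocSum hf hfloor hcover
    _ ≤ κ * y ^ p / log y ^ A := hgrowth y hy1
    _ ≤ κ * (2 * x) ^ p / (2 ^ A)⁻¹ := by gcongr
    _ = 2 ^ A * (κ * (2 * x) ^ p) := by rw [div_inv_eq_mul, mul_comm]

end

theorem stmt_14 (a : ℕ → ℂ) (ν A κA : ℝ) (hν : 0 < ν) (hA : 1 ≤ A) (hκA : 2 ≤ κA)
    (hgrowth : ∀ x : ℝ, 1 < x →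
      ∑ n ∈ Finset.Ioc ⌊x⌋₊ ⌊x + x / Real.log x ^ A⌋₊, ‖a n‖ ≤
        κA * x ^ (1 / ν) / Real.log x ^ A) :
    ∀ x : ℝ, 1 < x →
      ∑ n ∈ Finset.Ioc ⌊x⌋₊ ⌊2 * x⌋₊, ‖a n‖ ≤
        (κA * 2 ^ (A + 1 / ν)) * x ^ (1 / ν) := by
  intro x hx
  have hf : ∀ n, 0 ≤ ‖a n‖ := fun n ↦ norm_nonneg (a n)
  have hκ : 0 ≤ κA := by linarith
  have hp : 0 ≤ 1 / ν := by positivity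
  have hdyadic : floorIocSum (‖a ·‖) x (2 * x) ≤ 2 ^ A * (κA * (2 * x) ^ (1 / ν)) := by
    rcases le_total x (exp 1) with hxe | hxe
    · exact floorIocSum_two_mul_le_of_le_exp_one hf (by linarith) hκ hp hgrowth hx hxe
    · have h2A : (2 : ℝ) ≤ 2 ^ A := by
        simpa using rpow_le_rpow_of_exponent_le one_le_two hA
      calc floorIocSum (‖a ·‖) x (2 * x) ≤ 2 * (κA * (2 * x) ^ (1 / ν)) :=
            floorIocSum_two_mul_le_of_exp_one_le hf (by linarith) hκ hp hgrowth hxe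
        _ ≤ 2 ^ A * (κA * (2 * x) ^ (1 / ν)) := by gcongr
  calc ∑ n ∈ Ioc ⌊x⌋₊ ⌊2 * x⌋₊, ‖a n‖ = floorIocSum (‖a ·‖) x (2 * x) := rfl
    _ ≤ 2 ^ A * (κA * (2 * x) ^ (1 / ν)) := hdyadic
    _ = κA * 2 ^ (A + 1 / ν) * x ^ (1 / ν) := by
        rw [mul_rpow zero_le_two (by linarith), rpow_add two_pos]; ring
end

section
/- Let q ≥ 2 and let a be coprime to q, and for complex z define the arithmetic function n ↦ z^{Ω_a(n)}, where Ω_a(n) := ∑_{p ≡ a (mod q)} v_p(n). Then for Re(s) > 1 and |z| < p(q,a) (the least prime ≡ a mod q), ∑_{n ≥ 1} z^{Ω_a(n)}/n^s = ζ(s)·∏_{p ≡ a (mod q)} (1 − z/p^s)^{−1}(1 − 1/p^s), and the product converges absolutely. -/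
/-!
The summand `n ↦ z ^ Ω_a(n) n^(-s)` is completely multiplicative; at a prime `p` it equals
`z p^(-s)` if `p ≡ a` and `p^(-s)` otherwise, so its norm is below `1` because `‖z‖ ≤ p`, and it
is summable over the primes. For such a function the partial sums are bounded by the partial
Euler products `∏_{p < N} (1 - ‖f p‖)⁻¹ ≤ exp (∑_p ‖f p‖ / (1 - ‖f p‖))`, so the series converges
absolutely and equals its Euler product. Dividing by the Euler product of `ζ(s)` cancels every
factor at a prime `p ≢ a` and leaves `(1 - z p^(-s))⁻¹ (1 - p^(-s))` at the primes `p ≡ a`.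
-/

open Complex Finset

namespace Nat

def cardFactorsIn (P : ℕ → Prop) [DecidablePred P] (n : ℕ) : ℕ :=
  ∑ p ∈ n.primeFactors.filter P, n.factorization p

variable {P : ℕ → Prop} [DecidablePred P]

lemma cardFactorsIn_eq_sum_factorization (n : ℕ) :
    n.cardFactorsIn P = n.factorization.sum fun p k => if P p then k else 0 := by
  rw [cardFactorsIn, sum_filter, Finsupp.sum, support_factorization]

@[simp] lemma cardFactorsIn_one : (1 : ℕ).cardFactorsIn P = 0 := by
  simp [cardFactorsIn]

lemma cardFactorsIn_mul {m n : ℕ} (hm : m ≠ 0) (hn : n ≠ 0) :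
    (m * n).cardFactorsIn P = m.cardFactorsIn P + n.cardFactorsIn P := by
  simp only [cardFactorsIn_eq_sum_factorization, factorization_mul hm hn]
  exact Finsupp.sum_add_index' (fun _ => by simp) (fun _ _ _ => by split <;> simp)

lemma Prime.cardFactorsIn {p : ℕ} (hp : p.Prime) :
    p.cardFactorsIn P = if P p then 1 else 0 := by
  rw [Nat.cardFactorsIn, hp.primeFactors, filter_singleton]
  split <;> simp [hp.factorization]

end Nat

section PowCardFactorsIn

variable (P : ℕ → Prop) [DecidablePred P] {M₀ : Type*} [MonoidWithZero M₀]

noncomputable def powCardFactorsIn (z : M₀) : ℕ →*₀ M₀ where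
  toFun n := if n = 0 then 0 else z ^ n.cardFactorsIn P
  map_zero' := if_pos rfl
  map_one' := by simp
  map_mul' m n := by
    rcases eq_or_ne m 0 with rfl | hm
    · simp
    rcases eq_or_ne n 0 with rfl | hn
    · simp
    simp [hm, hn, Nat.cardFactorsIn_mul hm hn, pow_add]

variable {P}

lemma powCardFactorsIn_apply_of_ne_zero (z : M₀) {n : ℕ} (hn : n ≠ 0) :
    powCardFactorsIn P z n = z ^ n.cardFactorsIn P :=
  if_neg hn

lemma powCardFactorsIn_apply_prime (z : M₀) {p : ℕ} (hp : p.Prime) :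
    powCardFactorsIn P z p = if P p then z else 1 := by
  rw [powCardFactorsIn_apply_of_ne_zero z hp.ne_zero, hp.cardFactorsIn]
  split <;> simp

end PowCardFactorsIn

lemma sum_range_le_tsum_smoothNumbers {g : ℕ → ℝ} (hg : ∀ n, 0 ≤ g n) (hg0 : g 0 = 0) {N : ℕ}
    (hsum : Summable fun m : N.smoothNumbers => g m) :
    ∑ n ∈ range N, g n ≤ ∑' m : N.smoothNumbers, g m := by
  calc ∑ n ∈ range N, g n = ∑ m ∈ (range N).subtype (· ∈ N.smoothNumbers), g m := by
        rw [sum_subtype_eq_sum_filter, sum_filter_of_ne]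
        intro n hn hgn
        exact Nat.mem_smoothNumbers_of_lt (Nat.pos_of_ne_zero (by rintro rfl; exact hgn hg0))
          (mem_range.mp hn)
    _ ≤ _ := Summable.sum_le_tsum _ (fun m _ => hg m) hsum

lemma sum_primesBelow_le_tsum_primes {g : ℕ → ℝ} (hg : ∀ p : Nat.Primes, 0 ≤ g p)
    (hsum : Summable fun p : Nat.Primes => g p) (N : ℕ) :
    ∑ p ∈ N.primesBelow, g p ≤ ∑' p : Nat.Primes, g p := by
  refine le_of_eq_of_le ?_ (Summable.sum_le_tsum (ι := Nat.Primes)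
    (N.primesBelow.preimage (↑) Subtype.val_injective.injOn) (fun p _ => hg p) hsum)
  exact (sum_preimage _ _ _ g fun p hp hp' =>
    (hp' ⟨⟨p, Nat.prime_of_mem_primesBelow hp⟩, rfl⟩).elim).symm

lemma Real.one_sub_inv_le_exp_div {y : ℝ} (hy : y < 1) :
    (1 - y)⁻¹ ≤ Real.exp (y / (1 - y)) := by
  have h : (1 - y)⁻¹ = y / (1 - y) + 1 := by field_simp [(sub_pos.mpr hy).ne']; ring
  rw [h]
  exact Real.add_one_le_exp _

theorem summable_norm_of_summable_norm_primes {F : Type*} [NormedField F] {f : ℕ →*₀ F}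
    (hlt : ∀ p : ℕ, p.Prime → ‖f p‖ < 1) (hsum : Summable fun p : Nat.Primes => ‖f p‖) :
    Summable (‖f ·‖) := by
  set w : ℕ → ℝ := fun p => ‖f p‖ / (1 - ‖f p‖)
  have hw0 (p : Nat.Primes) : 0 ≤ w p :=
    div_nonneg (norm_nonneg _) (sub_nonneg.mpr (hlt p p.prop).le)
  have hw : Summable fun p : Nat.Primes => w p := by
    refine (hsum.mul_left 2).of_norm_bounded_eventually ?_
    filter_upwards [hsum.tendsto_cofinite_zero.eventually (gt_mem_nhds one_half_pos)] with p hp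
    rw [Real.norm_of_nonneg (hw0 p), div_le_iff₀ (by linarith)]
    nlinarith [norm_nonneg (f p)]
  refine summable_of_sum_range_le (fun n => norm_nonneg _)
    (c := Real.exp (∑' p : Nat.Primes, w p)) fun N => ?_
  obtain ⟨hsmooth, hprod⟩ :=
    EulerProduct.summable_and_hasSum_smoothNumbers_prod_primesBelow_geometric
      (f := ((normHom.comp f : ℕ →*₀ ℝ) : ℕ →* ℝ)) (fun hp => by simpa using hlt _ hp) N
  simp only [MonoidHom.coe_coe, MonoidWithZeroHom.comp_apply, normHom_apply, norm_norm]
    at hsmooth hprod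
  calc ∑ n ∈ range N, ‖f n‖ ≤ ∑' m : N.smoothNumbers, ‖f m‖ :=
        sum_range_le_tsum_smoothNumbers (fun n => norm_nonneg _) (by simp) hsmooth
    _ = ∏ p ∈ N.primesBelow, (1 - ‖f p‖)⁻¹ := hprod.tsum_eq
    _ ≤ ∏ p ∈ N.primesBelow, Real.exp (w p) := by
        refine prod_le_prod (fun p hp => ?_) (fun p hp => ?_)
        · exact inv_nonneg.mpr (sub_nonneg.mpr (hlt p (Nat.prime_of_mem_primesBelow hp)).le)
        · exact Real.one_sub_inv_le_exp_div (hlt p (Nat.prime_of_mem_primesBelow hp))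
    _ = Real.exp (∑ p ∈ N.primesBelow, w p) := (Real.exp_sum _ _).symm
    _ ≤ _ := Real.exp_le_exp.mpr (sum_primesBelow_le_tsum_primes hw0 hw N)

lemma HasProd.subtype_one_sub_inv_mul_one_sub {ι K : Type*} [Field K] [TopologicalSpace K]
    [ContinuousInv₀ K] [ContinuousMul K] {u v : ι → K} {a b : K}
    (hu : HasProd (fun i => (1 - u i)⁻¹) a) (hv : HasProd (fun i => (1 - v i)⁻¹) b) (hb : b ≠ 0)
    {S : Set ι} (huv : ∀ i ∉ S, u i = v i) (hv1 : ∀ i, v i ≠ 1) :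
    HasProd (fun i : S => (1 - u i)⁻¹ * (1 - v i)) (a / b) := by
  have hsupp : Function.mulSupport (fun i => (1 - u i)⁻¹ / (1 - v i)⁻¹) ⊆ S := by
    intro i hi
    by_contra hiS
    exact hi (show (1 - u i)⁻¹ / (1 - v i)⁻¹ = 1 by
      rw [huv i hiS, div_self (inv_ne_zero (sub_ne_zero.mpr (hv1 i).symm))])
  simpa only [Function.comp_def, div_inv_eq_mul] using
    (hasProd_subtype_iff_of_mulSupport_subset hsupp).mpr (hu.div₀ hv hb)

lemma norm_riemannZetaSummandHom_lt_inv {s : ℂ} (hs : 1 < s.re) {n : ℕ} (hn : 1 < n) :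
    ‖riemannZetaSummandHom (ne_zero_of_one_lt_re hs) n‖ < (n : ℝ)⁻¹ := by
  have hn' : (1 : ℝ) < n := by exact_mod_cast hn
  rw [riemannZetaSummandHom, MonoidWithZeroHom.coe_mk, ZeroHom.coe_mk,
    norm_natCast_cpow_of_pos (by omega), ← Real.rpow_neg_one]
  exact Real.rpow_lt_rpow_of_exponent_lt hn' (by rw [neg_re]; linarith)

section LSeries

variable {P : ℕ → Prop} [DecidablePred P] {z s : ℂ}

lemma powCardFactorsIn_mul_riemannZetaSummandHom_apply_prime (hs : s ≠ 0) {p : ℕ}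
    (hp : p.Prime) :
    (powCardFactorsIn P z * riemannZetaSummandHom hs) p =
      (if P p then z else 1) * (p : ℂ) ^ (-s) := by
  change powCardFactorsIn P z p * riemannZetaSummandHom hs p = _
  rw [powCardFactorsIn_apply_prime z hp]
  rfl

lemma norm_powCardFactorsIn_mul_riemannZetaSummandHom_prime_lt_one
    (hz : ∀ p : ℕ, p.Prime → P p → ‖z‖ ≤ p) (hs : 1 < s.re) {p : ℕ} (hp : p.Prime) :
    ‖(powCardFactorsIn P z * riemannZetaSummandHom (ne_zero_of_one_lt_re hs)) p‖ < 1 := by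
  have hp0 : (0 : ℝ) < p := by exact_mod_cast hp.pos
  have hw : ‖(if P p then z else 1)‖ ≤ p := by
    split_ifs with hPp
    exacts [hz p hp hPp, by exact_mod_cast hp.one_lt.le]
  calc _ = ‖(if P p then z else 1)‖ * ‖riemannZetaSummandHom (ne_zero_of_one_lt_re hs) p‖ := by
        rw [powCardFactorsIn_mul_riemannZetaSummandHom_apply_prime _ hp, norm_mul]; rfl
    _ ≤ p * ‖riemannZetaSummandHom (ne_zero_of_one_lt_re hs) p‖ := by gcongr
    _ < p * (p : ℝ)⁻¹ := by gcongr; exact norm_riemannZetaSummandHom_lt_inv hs hp.one_lt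
    _ = 1 := mul_inv_cancel₀ hp0.ne'

lemma summable_norm_powCardFactorsIn_mul_riemannZetaSummandHom
    (hz : ∀ p : ℕ, p.Prime → P p → ‖z‖ ≤ p) (hs : 1 < s.re) :
    Summable (‖(powCardFactorsIn P z * riemannZetaSummandHom (ne_zero_of_one_lt_re hs)) ·‖) := by
  refine summable_norm_of_summable_norm_primes
    (fun p hp => norm_powCardFactorsIn_mul_riemannZetaSummandHom_prime_lt_one hz hs hp) ?_
  refine Summable.of_nonneg_of_le (fun _ => norm_nonneg _) (fun p => ?_)
    (((summable_riemannZetaSummand hs).comp_injective Nat.Primes.coe_nat_injective).mul_left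
      (max ‖z‖ 1))
  rw [powCardFactorsIn_mul_riemannZetaSummandHom_apply_prime _ p.prop, norm_mul]
  gcongr
  · split_ifs <;> simp
  · exact le_rfl

lemma LSeries_pow_cardFactorsIn_eq_tsum (hs : s ≠ 0) :
    LSeries (fun n => z ^ n.cardFactorsIn P) s =
      ∑' n, (powCardFactorsIn P z * riemannZetaSummandHom hs) n := by
  rw [LSeries_congr (g := powCardFactorsIn P z)
    (fun hn => (powCardFactorsIn_apply_of_ne_zero z hn).symm), LSeries]
  exact tsum_congr fun n => LSeries.term_def₀ (map_zero _) s n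

theorem LSeries_pow_cardFactorsIn_div_riemannZeta_hasProd
    (hz : ∀ p : ℕ, p.Prime → P p → ‖z‖ ≤ p) (hs : 1 < s.re) :
    HasProd (fun p : {p : Nat.Primes // P p} =>
        (1 - z / ((p : ℕ) : ℂ) ^ s)⁻¹ * (1 - 1 / ((p : ℕ) : ℂ) ^ s))
      (LSeries (fun n => z ^ n.cardFactorsIn P) s / riemannZeta s) := by
  have hs0 := ne_zero_of_one_lt_re hs
  have hf_prime (p : Nat.Primes) :=
    powCardFactorsIn_mul_riemannZetaSummandHom_apply_prime (P := P) (z := z) hs0 p.prop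
  have hv1 (p : Nat.Primes) : ((p : ℕ) : ℂ) ^ (-s) ≠ 1 := by
    refine ne_of_apply_ne norm (ne_of_lt ?_)
    rw [norm_one]
    exact (norm_riemannZetaSummandHom_lt_inv hs p.prop.one_lt).trans
      (inv_lt_one_of_one_lt₀ (by exact_mod_cast p.prop.one_lt))
  rw [LSeries_pow_cardFactorsIn_eq_tsum hs0]
  have hf := EulerProduct.eulerProduct_completely_multiplicative_hasProd
    (summable_norm_powCardFactorsIn_mul_riemannZetaSummandHom hz hs)
  refine (hf.subtype_one_sub_inv_mul_one_sub (riemannZeta_eulerProduct_hasProd hs)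
    (riemannZeta_ne_zero_of_one_lt_re hs) (S := {p : Nat.Primes | P p}) (fun p hp => ?_)
    hv1).congr_fun fun p => ?_
  · rw [Set.mem_ofPred_eq] at hp
    simp [hf_prime, hp]
  · rw [hf_prime, if_pos (show P _ from p.2), cpow_neg, one_div, div_eq_mul_inv]

end LSeries

theorem stmt_18_general (q : ℕ) (a : (ZMod q)ˣ) (z : ℂ)
    (hz : ‖z‖ <
      ((sInf {p : ℕ | p.Prime ∧ ((p : ZMod q) = (a : ZMod q))} : ℕ) : ℝ))
    (s : ℂ) (hs : 1 < s.re) :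
    Multipliable (fun p : {p : Nat.Primes // (((p : Nat.Primes) : ℕ) : ZMod q) = (a : ZMod q)} =>
        (1 - z / ((((p : Nat.Primes) : ℕ)) : ℂ) ^ s)⁻¹ *
          (1 - 1 / ((((p : Nat.Primes) : ℕ)) : ℂ) ^ s)) ∧
    ∑' n : ℕ,
        (if n = 0 then 0 else
          z ^ (∑ p ∈ n.primeFactors.filter (fun p : ℕ => ((p : ZMod q) = (a : ZMod q))),
                n.factorization p) /
            (n : ℂ) ^ s) =
      riemannZeta s *
        ∏' p : {p : Nat.Primes // (((p : Nat.Primes) : ℕ) : ZMod q) = (a : ZMod q)},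
          ((1 - z / ((((p : Nat.Primes) : ℕ)) : ℂ) ^ s)⁻¹ *
            (1 - 1 / ((((p : Nat.Primes) : ℕ)) : ℂ) ^ s)) := by
  have hz' (p : ℕ) (hp : p.Prime) (hpa : (p : ZMod q) = a) : ‖z‖ ≤ p := by
    have hmin : sInf {p : ℕ | p.Prime ∧ (p : ZMod q) = a} ≤ p := Nat.sInf_le ⟨hp, hpa⟩
    exact hz.le.trans (by exact_mod_cast hmin)
  have h := LSeries_pow_cardFactorsIn_div_riemannZeta_hasProd hz' hs
  refine ⟨h.multipliable, ?_⟩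
  rw [h.tprod_eq, mul_div_cancel₀ _ (riemannZeta_ne_zero_of_one_lt_re hs)]
  -- the series on the left is `LSeries (fun n => z ^ n.cardFactorsIn _) s` unfolded
  rfl

theorem stmt_18 (q : ℕ) (hq : 2 ≤ q) [NeZero q] (a : (ZMod q)ˣ) (z : ℂ)
    (hz : ‖z‖ <
      ((sInf {p : ℕ | p.Prime ∧ ((p : ZMod q) = (a : ZMod q))} : ℕ) : ℝ))
    (s : ℂ) (hs : 1 < s.re) :
    Multipliable (fun p : {p : Nat.Primes // (((p : Nat.Primes) : ℕ) : ZMod q) = (a : ZMod q)} =>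
        (1 - z / ((((p : Nat.Primes) : ℕ)) : ℂ) ^ s)⁻¹ *
          (1 - 1 / ((((p : Nat.Primes) : ℕ)) : ℂ) ^ s)) ∧
    ∑' n : ℕ,
        (if n = 0 then 0 else
          z ^ (∑ p ∈ n.primeFactors.filter (fun p : ℕ => ((p : ZMod q) = (a : ZMod q))),
                n.factorization p) /
            (n : ℂ) ^ s) =
      riemannZeta s *
        ∏' p : {p : Nat.Primes // (((p : Nat.Primes) : ℕ) : ZMod q) = (a : ZMod q)},
          ((1 - z / ((((p : Nat.Primes) : ℕ)) : ℂ) ^ s)⁻¹ *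
            (1 - 1 / ((((p : Nat.Primes) : ℕ)) : ℂ) ^ s)) :=
  stmt_18_general q a z hz s hs
end
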